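/- Fix reals 0 < R₁ < R₂ < R with R·R₁ ≤ R₂², and α > 0. Let r₁ on [R₁, R₂] with density 2r/(R₂² − R₁²) and r₂ on [R₂, R] with density 2r/(R² − R₂²) be independent random variables, and for c > 0 let q(c) = P( r₂^{2α} ≥ c·r₁^{2α} ) (the noise-free probability that both paired backscatter signals are successfully decoded when c = γ·κ). Then: (i) q(c) = 1 if c ≤ 1; (ii) q(c) = (2R₂²R² + 2R₁²R₂² − 2R₁²R² − R₂⁴(c^{−1/α} + c^{1/α})) / (2(R₂² − R₁²)(R² − R₂²)) if 1 < c ≤ (R/R₂)^{2α}; (iii) q(c) = (2R₁²R₂² − 2R₁²R² + (R⁴ − R₂⁴)·c^{−1/α}) / (2(R₂² − R₁²)(R² − R₂²)) if (R/R₂)^{2α} < c ≤ (R₂/R₁)^{2α}; (iv) q(c) = (−2R₁²R² + R⁴·c^{−1/α} + R₁⁴·c^{1/α}) / (2(R₂² − R₁²)(R² − R₂²)) if (R₂/R₁)^{2α} < c ≤ (R/R₁)^{2α}; (v) q(c) = 0 if c > (R/R₁)^{2α}. -/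

import Mathlib

/-!
Write `c = s^(2α)` with `s > 0`; the event is then `s r₁ ≤ r₂`. Since `max(t, x)²` has right
derivative `2x·[t ≤ x]` everywhere, integrating out `r₂` leaves, up to the normalising constants,
`2r₁ (max(s r₁, R)² - max(s r₁, R₂)²)`, and `r ↦ 2r max(s r, m)²` has the `C¹` primitive
`m²r² + (max(s r, m)² - m²)² / (2s²)`. So `q` is a combination of four values of such primitives,
and the five regimes of `c` are the possible positions of `s R₁, s R₂` relative to `R₂, R`
(`R R₁ ≤ R₂²` puts the thresholds in the order `1 < R/R₂ ≤ R₂/R₁ < R/R₁`).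
-/

open MeasureTheory Set

/-- The noise-free success probability `q(c) = P(r₂^{2α} ≥ c·r₁^{2α})`, where `r₁` has
density `2r/(R₂² − R₁²)` on `[R₁, R₂]` and `r₂` independently has density
`2r/(R² − R₂²)` on `[R₂, R]`, expressed as the double integral of the joint density
over the event. -/
noncomputable def noiseFreeSuccessProb (R₁ R₂ R α c : ℝ) : ℝ :=
  ∫ r₁ in R₁..R₂, ∫ r₂ in R₂..R,
    if c * r₁ ^ (2 * α) ≤ r₂ ^ (2 * α)
    then 2 * r₁ / (R₂ ^ 2 - R₁ ^ 2) * (2 * r₂ / (R ^ 2 - R₂ ^ 2)) else 0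

open Real intervalIntegral

theorem integral_ite_le_two_mul (t a b : ℝ) :
    ∫ r in a..b, (if t ≤ r then 2 * r else 0) = max t b ^ 2 - max t a ^ 2 := by
  refine integral_eq_sub_of_hasDeriv_right (f := fun x => max t x ^ 2) (by fun_prop)
    (fun x _ => ?_) ?_
  · rcases le_or_gt t x with htx | hxt
    · rw [if_pos htx]
      refine ((hasDerivAt_pow 2 x).hasDerivWithinAt.congr (fun y hy => ?_) ?_).congr_deriv
        (by ring)
      · rw [max_eq_right (htx.trans hy.le)]
      · rw [max_eq_right htx]
    · rw [if_neg hxt.not_ge]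
      refine ((hasDerivAt_const x (t ^ 2)).congr_of_eventuallyEq ?_).hasDerivWithinAt
      filter_upwards [eventually_lt_nhds hxt] with y hy
      rw [max_eq_left hy.le]
  · have : (fun r : ℝ => if t ≤ r then 2 * r else 0) = (Ici t).indicator (fun r => 2 * r) := by
      ext r; simp [indicator_apply]
    rw [this, intervalIntegrable_iff]
    exact ((continuous_const.mul continuous_id).intervalIntegrable a b).def'.indicator
      measurableSet_Ici

noncomputable def maxSqPrimitive (s m r : ℝ) : ℝ :=
  m ^ 2 * r ^ 2 + (max (s * r) m ^ 2 - m ^ 2) ^ 2 / (2 * s ^ 2)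

theorem maxSqPrimitive_of_le {s m r : ℝ} (h : s * r ≤ m) :
    maxSqPrimitive s m r = m ^ 2 * r ^ 2 := by
  simp [maxSqPrimitive, max_eq_right h]

theorem maxSqPrimitive_of_ge {s m r : ℝ} (hs : s ≠ 0) (h : m ≤ s * r) :
    maxSqPrimitive s m r = s ^ 2 * r ^ 4 / 2 + m ^ 4 / (2 * s ^ 2) := by
  rw [maxSqPrimitive, max_eq_left h]
  field_simp
  ring

theorem integral_two_mul_max_sq {s : ℝ} (hs : 0 < s) (m a b : ℝ) :
    ∫ r in a..b, 2 * r * max (s * r) m ^ 2 = maxSqPrimitive s m b - maxSqPrimitive s m a := by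
  refine integral_eq_sub_of_hasDeriv_right (by unfold maxSqPrimitive; fun_prop) (fun x _ => ?_)
    ((by fun_prop : Continuous fun r : ℝ => 2 * r * max (s * r) m ^ 2).intervalIntegrable a b)
  rcases le_or_gt m (s * x) with hmx | hxm
  · have hP : HasDerivAt (fun y => s ^ 2 * y ^ 4 / 2 + m ^ 4 / (2 * s ^ 2))
        (2 * x * max (s * x) m ^ 2) x := by
      rw [max_eq_left hmx]
      exact (((hasDerivAt_pow 4 x).const_mul (s ^ 2)).div_const 2).add_const _ |>.congr_deriv
        (by ring)
    refine hP.hasDerivWithinAt.congr (fun y hy => maxSqPrimitive_of_ge hs.ne' ?_)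
      (maxSqPrimitive_of_ge hs.ne' hmx)
    exact hmx.trans (mul_le_mul_of_nonneg_left hy.le hs.le)
  · have hP : HasDerivAt (fun y => m ^ 2 * y ^ 2) (2 * x * max (s * x) m ^ 2) x := by
      rw [max_eq_right hxm.le]
      exact ((hasDerivAt_pow 2 x).const_mul (m ^ 2)).congr_deriv (by ring)
    refine (hP.congr_of_eventuallyEq ?_).hasDerivWithinAt
    filter_upwards [(continuous_const.mul continuous_id).continuousAt.eventually_lt
      continuousAt_const hxm] with y hy
    exact maxSqPrimitive_of_le hy.le

theorem noiseFreeSuccessProb_rpow_eq {R₁ R₂ R α s : ℝ} (hR₁ : 0 ≤ R₁) (hR₂ : 0 ≤ R₂)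
    (hR : 0 ≤ R) (hα : 0 < α) (hs : 0 < s) :
    noiseFreeSuccessProb R₁ R₂ R α (s ^ (2 * α)) =
      (maxSqPrimitive s R R₂ - maxSqPrimitive s R R₁ -
          (maxSqPrimitive s R₂ R₂ - maxSqPrimitive s R₂ R₁)) /
        ((R₂ ^ 2 - R₁ ^ 2) * (R ^ 2 - R₂ ^ 2)) := by
  have nonneg_of_mem {a b r : ℝ} (ha : 0 ≤ a) (hb : 0 ≤ b) (hr : r ∈ uIcc a b) : 0 ≤ r :=
    (le_min ha hb).trans hr.1
  have hinner : ∀ r₁ ∈ uIcc R₁ R₂,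
      (∫ r₂ in R₂..R, if s ^ (2 * α) * r₁ ^ (2 * α) ≤ r₂ ^ (2 * α)
        then 2 * r₁ / (R₂ ^ 2 - R₁ ^ 2) * (2 * r₂ / (R ^ 2 - R₂ ^ 2)) else 0) =
      ((R₂ ^ 2 - R₁ ^ 2) * (R ^ 2 - R₂ ^ 2))⁻¹ *
        (2 * r₁ * max (s * r₁) R ^ 2 - 2 * r₁ * max (s * r₁) R₂ ^ 2) := by
    intro r₁ hr₁
    rw [mul_inv]
    calc _ = ∫ r₂ in R₂..R, (R₂ ^ 2 - R₁ ^ 2)⁻¹ * (R ^ 2 - R₂ ^ 2)⁻¹ * (2 * r₁) *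
            (if s * r₁ ≤ r₂ then 2 * r₂ else 0) := by
          refine integral_congr fun r₂ hr₂ => ?_
          have hr₁₀ := nonneg_of_mem hR₁ hR₂ hr₁
          have hr₂₀ := nonneg_of_mem hR₂ hR hr₂
          simp only [← mul_rpow hs.le hr₁₀,
            rpow_le_rpow_iff (mul_nonneg hs.le hr₁₀) hr₂₀ (by positivity : (0 : ℝ) < 2 * α)]
          split_ifs <;> ring
      _ = _ := by rw [intervalIntegral.integral_const_mul, integral_ite_le_two_mul]; ring
  rw [noiseFreeSuccessProb, integral_congr hinner, intervalIntegral.integral_const_mul,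
    intervalIntegral.integral_sub, integral_two_mul_max_sq hs, integral_two_mul_max_sq hs]
  · ring
  all_goals exact (by fun_prop : Continuous fun r : ℝ => 2 * r * max (s * r) _ ^ 2)
    |>.intervalIntegrable _ _

section ClosedForm

variable {R₁ R₂ R α s : ℝ}

theorem noiseFreeSuccessProb_rpow_of_le_one (h0 : 0 < R₁) (h12 : R₁ < R₂) (h2R : R₂ < R)
    (hα : 0 < α) (hs : 0 < s) (h : s ≤ 1) :
    noiseFreeSuccessProb R₁ R₂ R α (s ^ (2 * α)) = 1 := by
  have h₁ : s * R₁ ≤ R₂ := by nlinarith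
  have h₂ : s * R₂ ≤ R₂ := by nlinarith
  rw [noiseFreeSuccessProb_rpow_eq h0.le (by linarith) (by linarith) hα hs,
    maxSqPrimitive_of_le (h₂.trans h2R.le), maxSqPrimitive_of_le (h₁.trans h2R.le),
    maxSqPrimitive_of_le h₂, maxSqPrimitive_of_le h₁,
    div_eq_one_iff_eq (mul_pos (by nlinarith) (by nlinarith)).ne']
  ring

theorem noiseFreeSuccessProb_rpow_of_one_lt_of_mul_le (h0 : 0 < R₁) (h12 : R₁ < R₂)
    (h2R : R₂ < R) (hRR : R * R₁ ≤ R₂ ^ 2) (hα : 0 < α) (hs : 0 < s) (h : 1 < s)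
    (h' : s * R₂ ≤ R) :
    noiseFreeSuccessProb R₁ R₂ R α (s ^ (2 * α)) =
      (2 * R₂ ^ 2 * R ^ 2 + 2 * R₁ ^ 2 * R₂ ^ 2 - 2 * R₁ ^ 2 * R ^ 2 -
          R₂ ^ 4 * ((s ^ 2)⁻¹ + s ^ 2)) / (2 * (R₂ ^ 2 - R₁ ^ 2) * (R ^ 2 - R₂ ^ 2)) := by
  have h₁ : s * R₁ ≤ R₂ := by nlinarith
  have hD₂ : R₂ ^ 2 - R₁ ^ 2 ≠ 0 := by nlinarith
  have hD : R ^ 2 - R₂ ^ 2 ≠ 0 := by nlinarith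
  rw [noiseFreeSuccessProb_rpow_eq h0.le (by linarith) (by linarith) hα hs,
    maxSqPrimitive_of_le h', maxSqPrimitive_of_le (h₁.trans h2R.le),
    maxSqPrimitive_of_ge hs.ne' (by nlinarith), maxSqPrimitive_of_le h₁]
  field_simp
  ring

theorem noiseFreeSuccessProb_rpow_of_mul_le_of_lt_mul (h0 : 0 < R₁) (h12 : R₁ < R₂)
    (h2R : R₂ < R) (hα : 0 < α) (hs : 0 < s) (h' : s * R₁ ≤ R₂) (h : R < s * R₂) :
    noiseFreeSuccessProb R₁ R₂ R α (s ^ (2 * α)) =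
      (2 * R₁ ^ 2 * R₂ ^ 2 - 2 * R₁ ^ 2 * R ^ 2 + (R ^ 4 - R₂ ^ 4) * (s ^ 2)⁻¹) /
        (2 * (R₂ ^ 2 - R₁ ^ 2) * (R ^ 2 - R₂ ^ 2)) := by
  have hD₂ : R₂ ^ 2 - R₁ ^ 2 ≠ 0 := by nlinarith
  have hD : R ^ 2 - R₂ ^ 2 ≠ 0 := by nlinarith
  rw [noiseFreeSuccessProb_rpow_eq h0.le (by linarith) (by linarith) hα hs,
    maxSqPrimitive_of_ge hs.ne' h.le, maxSqPrimitive_of_le (h'.trans h2R.le),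
    maxSqPrimitive_of_ge hs.ne' (by nlinarith), maxSqPrimitive_of_le h']
  field_simp
  ring

theorem noiseFreeSuccessProb_rpow_of_lt_mul_of_mul_le (h0 : 0 < R₁) (h12 : R₁ < R₂)
    (h2R : R₂ < R) (hRR : R * R₁ ≤ R₂ ^ 2) (hα : 0 < α) (hs : 0 < s) (h : R₂ < s * R₁)
    (h' : s * R₁ ≤ R) :
    noiseFreeSuccessProb R₁ R₂ R α (s ^ (2 * α)) =
      (-(2 * R₁ ^ 2 * R ^ 2) + R ^ 4 * (s ^ 2)⁻¹ + R₁ ^ 4 * s ^ 2) /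
        (2 * (R₂ ^ 2 - R₁ ^ 2) * (R ^ 2 - R₂ ^ 2)) := by
  have hD₂ : R₂ ^ 2 - R₁ ^ 2 ≠ 0 := by nlinarith
  have hD : R ^ 2 - R₂ ^ 2 ≠ 0 := by nlinarith
  rw [noiseFreeSuccessProb_rpow_eq h0.le (by linarith) (by linarith) hα hs,
    maxSqPrimitive_of_ge hs.ne' (by nlinarith), maxSqPrimitive_of_le h',
    maxSqPrimitive_of_ge hs.ne' (by nlinarith), maxSqPrimitive_of_ge hs.ne' h.le]
  field_simp
  ring

theorem noiseFreeSuccessProb_rpow_of_lt_mul (h0 : 0 < R₁) (h12 : R₁ < R₂) (h2R : R₂ < R)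
    (hα : 0 < α) (hs : 0 < s) (h : R < s * R₁) :
    noiseFreeSuccessProb R₁ R₂ R α (s ^ (2 * α)) = 0 := by
  rw [noiseFreeSuccessProb_rpow_eq h0.le (by linarith) (by linarith) hα hs,
    maxSqPrimitive_of_ge hs.ne' (by nlinarith), maxSqPrimitive_of_ge hs.ne' h.le,
    maxSqPrimitive_of_ge hs.ne' (by nlinarith), maxSqPrimitive_of_ge hs.ne' (by nlinarith)]
  ring

end ClosedForm

theorem backcom_noise_free_p2_closed_form
    (R₁ R₂ R α : ℝ) (h0 : 0 < R₁) (h12 : R₁ < R₂) (h2R : R₂ < R)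
    (hRR : R * R₁ ≤ R₂ ^ 2) (hα : 0 < α) (c : ℝ) (hc : 0 < c) :
    (c ≤ 1 → noiseFreeSuccessProb R₁ R₂ R α c = 1) ∧
    (1 < c → c ≤ (R / R₂) ^ (2 * α) →
      noiseFreeSuccessProb R₁ R₂ R α c =
        (2 * R₂ ^ 2 * R ^ 2 + 2 * R₁ ^ 2 * R₂ ^ 2 - 2 * R₁ ^ 2 * R ^ 2 -
            R₂ ^ 4 * (c ^ (-(1 / α)) + c ^ (1 / α))) /
          (2 * (R₂ ^ 2 - R₁ ^ 2) * (R ^ 2 - R₂ ^ 2))) ∧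
    ((R / R₂) ^ (2 * α) < c → c ≤ (R₂ / R₁) ^ (2 * α) →
      noiseFreeSuccessProb R₁ R₂ R α c =
        (2 * R₁ ^ 2 * R₂ ^ 2 - 2 * R₁ ^ 2 * R ^ 2 + (R ^ 4 - R₂ ^ 4) * c ^ (-(1 / α))) /
          (2 * (R₂ ^ 2 - R₁ ^ 2) * (R ^ 2 - R₂ ^ 2))) ∧
    ((R₂ / R₁) ^ (2 * α) < c → c ≤ (R / R₁) ^ (2 * α) →
      noiseFreeSuccessProb R₁ R₂ R α c =
        (-(2 * R₁ ^ 2 * R ^ 2) + R ^ 4 * c ^ (-(1 / α)) + R₁ ^ 4 * c ^ (1 / α)) /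
          (2 * (R₂ ^ 2 - R₁ ^ 2) * (R ^ 2 - R₂ ^ 2))) ∧
    ((R / R₁) ^ (2 * α) < c → noiseFreeSuccessProb R₁ R₂ R α c = 0) := by
  have hR₂ : 0 < R₂ := h0.trans h12
  have hR : 0 < R := hR₂.trans h2R
  have h2α : 0 < 2 * α := by positivity
  obtain ⟨s, hs, rfl⟩ : ∃ s, 0 < s ∧ s ^ (2 * α) = c :=
    ⟨c ^ (2 * α)⁻¹, by positivity, rpow_inv_rpow hc.le h2α.ne'⟩
  have hs_sq : (s ^ (2 * α)) ^ (1 / α) = s ^ 2 := by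
    rw [← rpow_mul hs.le, mul_assoc, mul_one_div_cancel hα.ne', mul_one, rpow_two]
  have hle {x : ℝ} (hx : 0 < x) : s ^ (2 * α) ≤ x ^ (2 * α) ↔ s ≤ x :=
    rpow_le_rpow_iff hs.le hx.le h2α
  have hlt {x : ℝ} (hx : 0 < x) : x ^ (2 * α) < s ^ (2 * α) ↔ x < s :=
    rpow_lt_rpow_iff hx.le hs.le h2α
  have hle_one : s ^ (2 * α) ≤ 1 ↔ s ≤ 1 := by simpa only [one_rpow] using hle one_pos
  have hlt_one : 1 < s ^ (2 * α) ↔ 1 < s := by simpa only [one_rpow] using hlt one_pos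
  simp only [hle_one, hlt_one, hle (div_pos hR hR₂), hle (div_pos hR₂ h0), hle (div_pos hR h0),
    hlt (div_pos hR hR₂), hlt (div_pos hR₂ h0), hlt (div_pos hR h0), le_div_iff₀ hR₂,
    le_div_iff₀ h0, div_lt_iff₀ hR₂, div_lt_iff₀ h0, rpow_neg (rpow_nonneg hs.le _), hs_sq]
  exact ⟨noiseFreeSuccessProb_rpow_of_le_one h0 h12 h2R hα hs,
    noiseFreeSuccessProb_rpow_of_one_lt_of_mul_le h0 h12 h2R hRR hα hs,
    fun h h' => noiseFreeSuccessProb_rpow_of_mul_le_of_lt_mul h0 h12 h2R hα hs h' h,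
    noiseFreeSuccessProb_rpow_of_lt_mul_of_mul_le h0 h12 h2R hRR hα hs,
    noiseFreeSuccessProb_rpow_of_lt_mul h0 h12 h2R hα hs⟩
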